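/- arXiv:1609.01338 — 3 statements merged into one kernel-verified Lean document; each statement's English description precedes it below -/
import Mathlib

section
/- Williamson's theorem: Let M ∈ ℝ^{2n×2n} be a positive definite symmetric matrix. Then there exist a diagonal matrix D ∈ ℝ^{n×n} with positive diagonal entries and a symplectic matrix S ∈ Sp(2n) such that SᵀMS = diag(D,D) (the block-diagonal 2n×2n matrix with two copies of D). Moreover D can be chosen with D₁₁ ≥ D₂₂ ≥ … ≥ Dₙₙ > 0. -/
open Matrix

/-- The standard symplectic form σ = [[0, Iₙ], [−Iₙ, 0]] on ℝ^{2n},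
indexed by `Fin n ⊕ Fin n`. -/
def symplJ (n : ℕ) : Matrix (Fin n ⊕ Fin n) (Fin n ⊕ Fin n) ℝ :=
  Matrix.fromBlocks 0 1 (-1) 0

/-- `S ∈ Sp(2n)`: a real `2n × 2n` matrix with `Sᵀ σ S = σ`. -/
def IsSymplectic {n : ℕ} (S : Matrix (Fin n ⊕ Fin n) (Fin n ⊕ Fin n) ℝ) : Prop :=
  Sᵀ * symplJ n * S = symplJ n

/-- The block-diagonal matrix `diag(D, D)` built from the diagonal entries `d`. -/
def Dtilde {n : ℕ} (d : Fin n → ℝ) : Matrix (Fin n ⊕ Fin n) (Fin n ⊕ Fin n) ℝ :=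
  Matrix.fromBlocks (Matrix.diagonal d) 0 0 (Matrix.diagonal d)

/-!
With `B = (√M)⁻¹` we have `B M B = 1`, and `K = B σ B` is a nonsingular real skew-symmetric
matrix. If an orthogonal `O` brings `K` to the form `O K Oᵀ = [[0, Λ], [−Λ, 0]]` with `Λ > 0`
diagonal, then `S = B Oᵀ diag(Λ, Λ)^(-1/2)` is symplectic and `Sᵀ M S = diag(Λ⁻¹, Λ⁻¹)`.

To find `O`, diagonalize the Hermitian matrix `H = iK`. Since `Hᵀ = −H`, its characteristic
polynomial is even, so exactly half of its eigenvalues (none of which vanish) are positive.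
An eigenvector `v = x + iy` of `H` with eigenvalue `μ` satisfies `Kx = μy` and `Ky = −μx`; for
positive eigenvalues the eigenvectors are also orthogonal for the bilinear dot product (as
`Hᵀ = −H`), and together with unitarity this makes the vectors `√2 x`, `√2 y` orthonormal.
-/

namespace Matrix.IsHermitian

variable {𝕜 ι : Type*} [RCLike 𝕜] [Fintype ι] [DecidableEq ι] {A : Matrix ι ι 𝕜}

open Polynomial in
lemma roots_charpoly_neg (hA : A.IsHermitian) :
    (-A).charpoly.roots = Multiset.map (fun i => -(hA.eigenvalues i : 𝕜)) Finset.univ.val := by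
  have : (-A).charpoly = ∏ i, (X - C (-(hA.eigenvalues i : 𝕜))) := by
    conv_lhs => rw [hA.spectral_theorem, ← map_neg, diagonal_neg,
      Unitary.conjStarAlgAut_apply, charpoly_mul_comm, ← mul_assoc]
    simp [charpoly_diagonal]
  rw [this, roots_prod]
  · simp
  · exact Finset.prod_ne_zero_iff.mpr fun i _ => X_sub_C_ne_zero _

lemma map_neg_eigenvalues (hA : A.IsHermitian) (hAT : Aᵀ = -A) :
    Multiset.map (fun i => -hA.eigenvalues i) Finset.univ.val =
      Multiset.map hA.eigenvalues Finset.univ.val := by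
  have h := hA.roots_charpoly_neg
  rw [← hAT, charpoly_transpose, hA.roots_charpoly_eq_eigenvalues] at h
  apply Multiset.map_injective (RCLike.ofReal_injective (K := 𝕜))
  simpa [Multiset.map_map, Function.comp_def] using h.symm

lemma card_pos_eigenvalues_eq_card_neg (hA : A.IsHermitian) (hAT : Aᵀ = -A) :
    Fintype.card {i // 0 < hA.eigenvalues i} = Fintype.card {i // hA.eigenvalues i < 0} := by
  have h := congrArg (Multiset.countP (0 < ·)) (hA.map_neg_eigenvalues hAT)
  simp only [Multiset.countP_map, Left.neg_pos_iff] at h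
  simpa only [Fintype.card_subtype, Finset.card_def, Finset.filter_val] using h.symm

lemma eigenvalues_ne_zero (hA : A.IsHermitian) (hdet : A.det ≠ 0) (i : ι) :
    hA.eigenvalues i ≠ 0 := by
  rw [hA.det_eq_prod_eigenvalues, Finset.prod_ne_zero_iff] at hdet
  exact_mod_cast hdet i (Finset.mem_univ i)

lemma card_pos_eigenvalues {n : ℕ} (hA : A.IsHermitian) (hAT : Aᵀ = -A) (hdet : A.det ≠ 0)
    (hcard : Fintype.card ι = n + n) : Fintype.card {i // 0 < hA.eigenvalues i} = n := by
  have hnonpos : Fintype.card {i // ¬ 0 < hA.eigenvalues i} =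
      Fintype.card {i // hA.eigenvalues i < 0} :=
    Fintype.card_congr <| Equiv.subtypeEquivRight fun i =>
      not_lt.trans (hA.eigenvalues_ne_zero hdet i).le_iff_lt
  have hcompl := Fintype.card_subtype_compl (fun i => 0 < hA.eigenvalues i)
  have hsymm := hA.card_pos_eigenvalues_eq_card_neg hAT
  omega

end Matrix.IsHermitian

lemma dotProduct_eq_zero_of_transpose_eq_neg {ι K : Type*} [Fintype ι] [Field K]
    {A : Matrix ι ι K} (hA : Aᵀ = -A) {x y : ι → K} {a b : K}
    (hx : A *ᵥ x = a • x) (hy : A *ᵥ y = b • y) (hab : a + b ≠ 0) : x ⬝ᵥ y = 0 := by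
  have h : b * (x ⬝ᵥ y) = -a * (x ⬝ᵥ y) :=
    calc b * (x ⬝ᵥ y) = x ⬝ᵥ A *ᵥ y := by rw [hy, dotProduct_smul, smul_eq_mul]
      _ = Aᵀ *ᵥ x ⬝ᵥ y := by rw [dotProduct_mulVec, mulVec_transpose]
      _ = -a * (x ⬝ᵥ y) := by
        rw [hA, neg_mulVec, hx, neg_dotProduct, smul_dotProduct, smul_eq_mul, neg_mul]
  have : (a + b) * (x ⬝ᵥ y) = 0 := by linear_combination h
  exact (mul_eq_zero.mp this).resolve_left hab

section RealAndImaginaryParts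

variable {ι : Type*}

lemma isHermitian_I_smul_map_ofReal {K : Matrix ι ι ℝ} (hK : Kᵀ = -K) :
    (Complex.I • K.map ((↑) : ℝ → ℂ)).IsHermitian := by
  ext i j
  have h := congrFun (congrFun hK j) i
  simp only [transpose_apply] at h
  simp [h]

lemma transpose_I_smul_map_ofReal {K : Matrix ι ι ℝ} (hK : Kᵀ = -K) :
    (Complex.I • K.map ((↑) : ℝ → ℂ))ᵀ = -(Complex.I • K.map ((↑) : ℝ → ℂ)) := by
  rw [transpose_smul, ← transpose_map, hK, Matrix.map_neg _ Complex.ofReal_neg, smul_neg]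

variable [Fintype ι]

lemma det_I_smul_map_ofReal_ne_zero [DecidableEq ι] {K : Matrix ι ι ℝ} (hK : K.det ≠ 0) :
    (Complex.I • K.map ((↑) : ℝ → ℂ)).det ≠ 0 := by
  have : (K.map ((↑) : ℝ → ℂ)).det = K.det := (Complex.ofRealHom.map_det K).symm
  simpa [det_smul, this, Complex.I_ne_zero] using hK

lemma re_map_ofReal_mulVec (K : Matrix ι ι ℝ) (v : ι → ℂ) :
    Complex.re ∘ (K.map (↑) *ᵥ v) = K *ᵥ (Complex.re ∘ v) := by
  ext i; simp [mulVec, dotProduct]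

lemma im_map_ofReal_mulVec (K : Matrix ι ι ℝ) (v : ι → ℂ) :
    Complex.im ∘ (K.map (↑) *ᵥ v) = K *ᵥ (Complex.im ∘ v) := by
  ext i; simp [mulVec, dotProduct]

lemma mulVec_re_im_of_I_smul_mulVec {K : Matrix ι ι ℝ} {v : ι → ℂ} {μ : ℝ}
    (hv : (Complex.I • K.map (↑)) *ᵥ v = (μ : ℂ) • v) :
    K *ᵥ (Complex.re ∘ v) = μ • (Complex.im ∘ v) ∧
      K *ᵥ (Complex.im ∘ v) = -μ • (Complex.re ∘ v) := by
  have hKv : K.map (↑) *ᵥ v = (-(μ : ℂ) * Complex.I) • v :=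
    calc K.map (↑) *ᵥ v = (-Complex.I) • ((Complex.I • K.map (↑)) *ᵥ v) := by
          rw [smul_mulVec, smul_smul]; simp
      _ = _ := by rw [hv, smul_smul, neg_mul, neg_mul, mul_comm]
  rw [← re_map_ofReal_mulVec, ← im_map_ofReal_mulVec, hKv]
  constructor <;> ext i <;> simp

lemma re_star_dotProduct (u w : ι → ℂ) :
    (star u ⬝ᵥ w).re =
      (Complex.re ∘ u) ⬝ᵥ (Complex.re ∘ w) + (Complex.im ∘ u) ⬝ᵥ (Complex.im ∘ w) := by
  simp [dotProduct, Finset.sum_add_distrib]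

lemma im_star_dotProduct (u w : ι → ℂ) :
    (star u ⬝ᵥ w).im =
      (Complex.re ∘ u) ⬝ᵥ (Complex.im ∘ w) - (Complex.im ∘ u) ⬝ᵥ (Complex.re ∘ w) := by
  simp [dotProduct, ← sub_eq_add_neg]

lemma re_dotProduct (u w : ι → ℂ) :
    (u ⬝ᵥ w).re =
      (Complex.re ∘ u) ⬝ᵥ (Complex.re ∘ w) - (Complex.im ∘ u) ⬝ᵥ (Complex.im ∘ w) := by
  simp [dotProduct, Finset.sum_sub_distrib]

lemma im_dotProduct (u w : ι → ℂ) :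
    (u ⬝ᵥ w).im =
      (Complex.re ∘ u) ⬝ᵥ (Complex.im ∘ w) + (Complex.im ∘ u) ⬝ᵥ (Complex.re ∘ w) := by
  simp [dotProduct, Finset.sum_add_distrib]

lemma re_im_dotProduct_of_star_dotProduct {u w : ι → ℂ} {c : ℝ}
    (hstar : star u ⬝ᵥ w = c) (hdot : u ⬝ᵥ w = 0) :
    (Complex.re ∘ u) ⬝ᵥ (Complex.re ∘ w) = c / 2 ∧
      (Complex.im ∘ u) ⬝ᵥ (Complex.im ∘ w) = c / 2 ∧
      (Complex.re ∘ u) ⬝ᵥ (Complex.im ∘ w) = 0 := by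
  have h₁ := congrArg Complex.re hstar
  have h₂ := congrArg Complex.im hstar
  have h₃ := congrArg Complex.re hdot
  have h₄ := congrArg Complex.im hdot
  rw [re_star_dotProduct, Complex.ofReal_re] at h₁
  rw [im_star_dotProduct, Complex.ofReal_im] at h₂
  rw [re_dotProduct, Complex.zero_re] at h₃
  rw [im_dotProduct, Complex.zero_im] at h₄
  refine ⟨?_, ?_, ?_⟩ <;> linarith

lemma sqrt_two_smul_dotProduct_sqrt_two_smul {a b : ι → ℝ} {c : ℝ} (h : a ⬝ᵥ b = c / 2) :
    √2 • a ⬝ᵥ √2 • b = c := by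
  rw [smul_dotProduct, dotProduct_smul, h, smul_eq_mul, smul_eq_mul, ← mul_assoc,
    Real.mul_self_sqrt zero_le_two]
  ring

end RealAndImaginaryParts

lemma exists_injective_monotone_comp_of_card_eq {ι α : Type*} [Fintype ι] [LinearOrder α]
    (f : ι → α) (p : ι → Prop) [DecidablePred p] {n : ℕ} (hp : Fintype.card {i // p i} = n) :
    ∃ e : Fin n → ι, Function.Injective e ∧ (∀ i, p (e i)) ∧ Monotone (f ∘ e) := by
  let g : Fin n ≃ {i // p i} := (Fintype.equivFinOfCardEq hp).symm
  let σ := Tuple.sort (fun i => f (g i))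
  refine ⟨fun i => (g (σ i)).1, ?_, fun i => (g (σ i)).2, Tuple.monotone_sort (fun i => f (g i))⟩
  exact Subtype.val_injective.comp (g.injective.comp σ.injective)

def skewDiagonal {m R : Type*} [DecidableEq m] [Ring R] (μ : m → R) :
    Matrix (m ⊕ m) (m ⊕ m) R :=
  fromBlocks 0 (diagonal μ) (-diagonal μ) 0

section NormalForm

variable {ι : Type*} [Fintype ι]

lemma of_mul_transpose_of_apply {κ R : Type*} [Semiring R] (u : κ → ι → R) (a b : κ) :
    (of u * (of u)ᵀ) a b = u a ⬝ᵥ u b := rfl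

lemma of_mul_mul_transpose_of_apply {κ R : Type*} [Semiring R] (u : κ → ι → R)
    (K : Matrix ι ι R) (a b : κ) :
    (of u * K * (of u)ᵀ) a b = u a ⬝ᵥ K *ᵥ u b := by
  rw [Matrix.mul_assoc]; rfl

lemma orthogonal_skewDiagonal_of_pairs {n : ℕ} {K : Matrix ι ι ℝ} {x y : Fin n → ι → ℝ}
    {μ : Fin n → ℝ} (hxx : ∀ i j, x i ⬝ᵥ x j = if i = j then 1 else 0)
    (hyy : ∀ i j, y i ⬝ᵥ y j = if i = j then 1 else 0) (hxy : ∀ i j, x i ⬝ᵥ y j = 0)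
    (hKx : ∀ i, K *ᵥ x i = μ i • y i) (hKy : ∀ i, K *ᵥ y i = -μ i • x i) :
    of (Sum.elim y x) * (of (Sum.elim y x))ᵀ = 1 ∧
      of (Sum.elim y x) * K * (of (Sum.elim y x))ᵀ = skewDiagonal μ := by
  constructor
  · ext (i | i) (j | j) <;>
      simp [of_mul_transpose_of_apply, hxx, hyy, hxy, dotProduct_comm (y _), one_apply]
  · ext (i | i) (j | j) <;>
      simp [of_mul_mul_transpose_of_apply, hKx, hKy, hxx, hyy, hxy, dotProduct_comm (y _),
        skewDiagonal, diagonal_apply]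
    all_goals split_ifs <;> simp_all

theorem exists_orthogonal_mul_mul_transpose_eq_skewDiagonal [DecidableEq ι] {n : ℕ}
    {K : Matrix ι ι ℝ} (hK : Kᵀ = -K) (hdet : K.det ≠ 0) (hcard : Fintype.card ι = n + n) :
    ∃ (O : Matrix (Fin n ⊕ Fin n) ι ℝ) (μ : Fin n → ℝ),
      O * Oᵀ = 1 ∧ O * K * Oᵀ = skewDiagonal μ ∧ (∀ i, 0 < μ i) ∧ Monotone μ := by
  set H := Complex.I • K.map ((↑) : ℝ → ℂ)
  have hH : H.IsHermitian := isHermitian_I_smul_map_ofReal hK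
  have hHT : Hᵀ = -H := transpose_I_smul_map_ofReal hK
  have hHdet : H.det ≠ 0 := det_I_smul_map_ofReal_ne_zero hdet
  set μ := hH.eigenvalues
  set v : ι → ι → ℂ := fun j => ⇑(hH.eigenvectorBasis j)
  obtain ⟨e, he, hμe, hmono⟩ := exists_injective_monotone_comp_of_card_eq μ _
    (hH.card_pos_eigenvalues hHT hHdet hcard)
  have horth (a b : ι) : star (v a) ⬝ᵥ v b = ((if a = b then 1 else 0 : ℝ) : ℂ) := by
    rw [dotProduct_comm, ← EuclideanSpace.inner_eq_star_dotProduct,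
      orthonormal_iff_ite.mp hH.eigenvectorBasis.orthonormal]
    split_ifs <;> simp
  have heig (j : ι) : H *ᵥ v j = (μ j : ℂ) • v j := by
    rw [hH.mulVec_eigenvectorBasis, RCLike.real_smul_eq_coe_smul (K := ℂ)]; rfl
  have hdot (a b : ι) (ha : 0 < μ a) (hb : 0 < μ b) : v a ⬝ᵥ v b = 0 :=
    dotProduct_eq_zero_of_transpose_eq_neg hHT (heig a) (heig b)
      (by exact_mod_cast (add_pos ha hb).ne')
  have hpair (i j : Fin n) := re_im_dotProduct_of_star_dotProduct (horth (e i) (e j))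
    (hdot _ _ (hμe i) (hμe j))
  let x (i : Fin n) : ι → ℝ := √2 • (Complex.re ∘ v (e i))
  let y (i : Fin n) : ι → ℝ := √2 • (Complex.im ∘ v (e i))
  obtain ⟨hOO, hOK⟩ := orthogonal_skewDiagonal_of_pairs (K := K) (x := x) (y := y) (μ := μ ∘ e)
    (fun i j => (sqrt_two_smul_dotProduct_sqrt_two_smul (hpair i j).1).trans
      (by simp only [he.eq_iff]))
    (fun i j => (sqrt_two_smul_dotProduct_sqrt_two_smul (hpair i j).2.1).trans
      (by simp only [he.eq_iff]))
    (fun i j => sqrt_two_smul_dotProduct_sqrt_two_smul (by rw [(hpair i j).2.2, zero_div]))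
    (fun i => by rw [mulVec_smul, (mulVec_re_im_of_I_smul_mulVec (heig (e i))).1, smul_comm]; rfl)
    (fun i => by rw [mulVec_smul, (mulVec_re_im_of_I_smul_mulVec (heig (e i))).2, smul_comm]; rfl)
  exact ⟨_, _, hOO, hOK, hμe, hmono⟩

end NormalForm

open scoped MatrixOrder in
lemma Matrix.PosDef.exists_transpose_eq_mul_mul_eq_one {m : Type*} [Fintype m] [DecidableEq m]
    {M : Matrix m m ℝ} (hM : M.PosDef) : ∃ B : Matrix m m ℝ, Bᵀ = B ∧ B * M * B = 1 := by
  set A := CFC.sqrt M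
  have hAT : Aᵀ = A := (nonneg_iff_posSemidef.mp (CFC.sqrt_nonneg M)).1
  have hAA : A * A = M := CFC.sqrt_mul_sqrt_self M hM.posSemidef.nonneg
  have hA : IsUnit A.det := by
    rw [isUnit_iff_ne_zero]
    intro h
    simpa [← hAA, h] using hM.det_pos.ne'
  refine ⟨A⁻¹, by rw [transpose_nonsing_inv, hAT], ?_⟩
  rw [← hAA, Matrix.mul_assoc, Matrix.mul_assoc, mul_nonsing_inv _ hA, Matrix.mul_one,
    nonsing_inv_mul _ hA]

section Symplectic

variable {n : ℕ}

lemma symplJ_eq_skewDiagonal : symplJ n = skewDiagonal 1 := by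
  simp [symplJ, skewDiagonal]

lemma transpose_symplJ : (symplJ n)ᵀ = -symplJ n := by
  simp [symplJ, fromBlocks_transpose, fromBlocks_neg]

lemma symplJ_mul_symplJ : symplJ n * symplJ n = -1 := by
  simp [symplJ, fromBlocks_multiply, ← fromBlocks_one, fromBlocks_neg]

lemma det_symplJ_ne_zero : (symplJ n).det ≠ 0 := by
  intro h
  simpa [h, det_neg] using congrArg det (symplJ_mul_symplJ (n := n))

lemma transpose_Dtilde (d : Fin n → ℝ) : (Dtilde d)ᵀ = Dtilde d := by
  simp [Dtilde]

lemma Dtilde_mul_Dtilde (a b : Fin n → ℝ) : Dtilde a * Dtilde b = Dtilde (a * b) := by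
  simp only [Dtilde, fromBlocks_multiply]
  simp

lemma Dtilde_mul_skewDiagonal_mul_Dtilde (w μ : Fin n → ℝ) :
    Dtilde w * skewDiagonal μ * Dtilde w = skewDiagonal (w * μ * w) := by
  simp only [Dtilde, skewDiagonal, fromBlocks_multiply]
  simp

lemma transpose_mul_Dtilde_mul (T X : Matrix (Fin n ⊕ Fin n) (Fin n ⊕ Fin n) ℝ)
    (w : Fin n → ℝ) :
    (T * Dtilde w)ᵀ * X * (T * Dtilde w) = Dtilde w * (Tᵀ * X * T) * Dtilde w := by
  simp [transpose_Dtilde, Matrix.mul_assoc]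

end Symplectic

lemma exists_mul_self_eq_inv {ι : Type*} {μ : ι → ℝ} (hμ : ∀ i, 0 < μ i) :
    ∃ w : ι → ℝ, w * w = μ⁻¹ ∧ w * μ * w = 1 := by
  refine ⟨fun i => (√(μ i))⁻¹, ?_, ?_⟩ <;> ext i
  · simp [← mul_inv, Real.mul_self_sqrt (hμ i).le]
  · simp [mul_right_comm _ (μ i), ← mul_inv, Real.mul_self_sqrt (hμ i).le, (hμ i).ne']

/-- **Williamson's theorem.** Every positive definite symmetric
`M ∈ ℝ^{2n×2n}` can be brought to the form `Sᵀ M S = diag(D, D)` with `S`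
symplectic and `D` diagonal with positive entries arranged in decreasing order. -/
theorem williamson (n : ℕ) (M : Matrix (Fin n ⊕ Fin n) (Fin n ⊕ Fin n) ℝ)
    (hM : M.PosDef) :
    ∃ (d : Fin n → ℝ) (S : Matrix (Fin n ⊕ Fin n) (Fin n ⊕ Fin n) ℝ),
      IsSymplectic S ∧ (∀ i, 0 < d i) ∧ Antitone d ∧ Sᵀ * M * S = Dtilde d := by
  obtain ⟨B, hBT, hBMB⟩ := hM.exists_transpose_eq_mul_mul_eq_one
  have hB : B.det ≠ 0 := by
    intro h
    simpa [h] using congrArg det hBMB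
  obtain ⟨O, μ, hOO, hOK, hμ, hmono⟩ := exists_orthogonal_mul_mul_transpose_eq_skewDiagonal
    (n := n) (K := B * symplJ n * B) (by simp [Matrix.mul_assoc, hBT, transpose_symplJ])
    (by simp [hB, det_symplJ_ne_zero]) (by simp)
  have hTJ : (B * Oᵀ)ᵀ * symplJ n * (B * Oᵀ) = skewDiagonal μ := by
    simpa [hBT, Matrix.mul_assoc] using hOK
  have hTM : (B * Oᵀ)ᵀ * M * (B * Oᵀ) = 1 := by
    simpa [hBT, Matrix.mul_assoc, hOO] using congrArg (O * · * Oᵀ) hBMB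
  obtain ⟨w, hww, hwμw⟩ := exists_mul_self_eq_inv hμ
  refine ⟨μ⁻¹, B * Oᵀ * Dtilde w, ?_, fun i => inv_pos.2 (hμ i),
    fun i j hij => inv_anti₀ (hμ i) (hmono hij), ?_⟩
  · rw [IsSymplectic, transpose_mul_Dtilde_mul, hTJ, Dtilde_mul_skewDiagonal_mul_Dtilde, hwμw,
      symplJ_eq_skewDiagonal]
  · rw [transpose_mul_Dtilde_mul, hTM, Matrix.mul_one, Dtilde_mul_Dtilde, hww]
end

section
/- Instability of the diagonalising matrix at degenerate spectrum: For ε ∈ (0,1) let M_ε = [[1,ε,0,0],[ε,1,0,0],[0,0,1,ε],[0,0,ε,1]] and M′_ε = diag(1+ε, 1−ε, 1+ε, 1−ε), both positive definite 4×4 matrices whose common Williamson diagonal form is D̃_ε = diag(1+ε, 1−ε, 1+ε, 1−ε). Then there exists a constant C > 0, independent of ε, such that for all ε ∈ (0,1) and all S, S′ ∈ Sp(4) with SᵀM_εS = D̃_ε and S′ᵀM′_εS′ = D̃_ε, one has ‖S − S′‖∞ ≥ C. -/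
open Matrix

/-- The operator (spectral) norm `‖·‖∞` of a matrix, i.e. the norm of the induced
linear map on Euclidean space. -/
noncomputable def opNorm {𝕜 : Type*} [RCLike 𝕜] {ι : Type*} [Fintype ι] [DecidableEq ι]
    (A : Matrix ι ι 𝕜) : ℝ :=
  ‖LinearMap.toContinuousLinearMap (Matrix.toEuclideanLin A)‖

/-- The `4 × 4` matrix `[[1,ε,0,0],[ε,1,0,0],[0,0,1,ε],[0,0,ε,1]]` (here `n = 2`). -/
noncomputable def McEx (ε : ℝ) : Matrix (Fin 2 ⊕ Fin 2) (Fin 2 ⊕ Fin 2) ℝ :=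
  Matrix.fromBlocks !![1, ε; ε, 1] 0 0 !![1, ε; ε, 1]

/-- The diagonal matrix `diag(1+ε, 1−ε, 1+ε, 1−ε)`, which is both `M′_ε` and the
common Williamson diagonal form `D̃_ε`. -/
noncomputable def McEx' (ε : ℝ) : Matrix (Fin 2 ⊕ Fin 2) (Fin 2 ⊕ Fin 2) ℝ :=
  Dtilde ![1 + ε, 1 - ε]

/-!
If `S` is symplectic and `Sᵀ M S = D̃`, then `S σ Sᵀ = σ` turns this into `σ M S = S σ D̃`, so `S`
intertwines `(σ M)² = -diag(A², A²)` with `(σ D̃)² = -diag(D², D²)` whenever `M = diag(A, A)`.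
Hence each half of a column of `S` belonging to the eigenvalue `d₁ = 1 + ε` is an eigenvector of
`A²` for `(1 + ε)²`. For `M_ε` that eigenspace is spanned by `(1, 1)`, so the first and third
columns of `S` are `(a, a, c, c)` and `(b, b, d, d)`, and their symplectic pairing gives
`2 (a d - c b) = 1`. For `M′_ε` it is spanned by `(1, 0)`, so `S′` vanishes where rows 2 and 4 of
`S` carry `a, b, c, d`. These are therefore entries of `S - S′`, bounded by `‖S - S′‖`, which
forces `‖S - S′‖ ≥ 1/2`.
-/

section Symplectic

variable {n : ℕ}

theorem symplJ_eq_neg_J (n : ℕ) : symplJ n = -J (Fin n) ℝ := by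
  simp [symplJ, J, fromBlocks_neg]

theorem isSymplectic_iff_mem_symplecticGroup {S : Matrix (Fin n ⊕ Fin n) (Fin n ⊕ Fin n) ℝ} :
    IsSymplectic S ↔ S ∈ symplecticGroup (Fin n) ℝ := by
  rw [IsSymplectic, symplJ_eq_neg_J, SymplecticGroup.mem_iff', Matrix.mul_neg, Matrix.neg_mul,
    neg_inj]

theorem IsSymplectic.mul_symplJ_mul_transpose {S : Matrix (Fin n ⊕ Fin n) (Fin n ⊕ Fin n) ℝ}
    (hS : IsSymplectic S) : S * symplJ n * Sᵀ = symplJ n := by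
  have := SymplecticGroup.mem_iff.mp (isSymplectic_iff_mem_symplecticGroup.mp hS)
  rw [symplJ_eq_neg_J, Matrix.mul_neg, Matrix.neg_mul, this]

theorem IsSymplectic.semiconjBy_symplJ_mul {S M D : Matrix (Fin n ⊕ Fin n) (Fin n ⊕ Fin n) ℝ}
    (hS : IsSymplectic S) (h : Sᵀ * M * S = D) :
    SemiconjBy S (symplJ n * D) (symplJ n * M) :=
  calc S * (symplJ n * D) = S * symplJ n * (Sᵀ * M * S) := by rw [h, Matrix.mul_assoc]
    _ = S * symplJ n * Sᵀ * M * S := by simp only [Matrix.mul_assoc]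
    _ = symplJ n * M * S := by rw [hS.mul_symplJ_mul_transpose]

theorem symplJ_mul_fromBlocks_sq (A : Matrix (Fin n) (Fin n) ℝ) :
    (symplJ n * fromBlocks A 0 0 A) ^ 2 = -fromBlocks (A * A) 0 0 (A * A) := by
  simp [sq, symplJ, fromBlocks_multiply, fromBlocks_neg]

theorem IsSymplectic.fromBlocks_mul_self_mul_eq {S : Matrix (Fin n ⊕ Fin n) (Fin n ⊕ Fin n) ℝ}
    {A B : Matrix (Fin n) (Fin n) ℝ} (hS : IsSymplectic S)
    (h : Sᵀ * fromBlocks A 0 0 A * S = fromBlocks B 0 0 B) :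
    fromBlocks (A * A) 0 0 (A * A) * S = S * fromBlocks (B * B) 0 0 (B * B) := by
  have := (hS.semiconjBy_symplJ_mul h).pow_right 2
  rw [symplJ_mul_fromBlocks_sq, symplJ_mul_fromBlocks_sq, SemiconjBy, Matrix.mul_neg,
    Matrix.neg_mul, neg_inj] at this
  exact this.symm

theorem IsSymplectic.col_pairing_eq_one {S : Matrix (Fin n ⊕ Fin n) (Fin n ⊕ Fin n) ℝ}
    (hS : IsSymplectic S) (k : Fin n) :
    ∑ i, S (.inl i) (.inl k) * S (.inr i) (.inr k) -
      ∑ i, S (.inr i) (.inl k) * S (.inl i) (.inr k) = 1 := by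
  simpa [symplJ, mul_apply, Fintype.sum_sum_type, one_apply, neg_add_eq_sub] using
    congrFun₂ hS (.inl k) (.inr k)

theorem mulVec_eq_smul_of_fromBlocks_mul_eq {P : Matrix (Fin n) (Fin n) ℝ} {e : Fin n → ℝ}
    {S : Matrix (Fin n ⊕ Fin n) (Fin n ⊕ Fin n) ℝ}
    (h : fromBlocks P 0 0 P * S = S * fromBlocks (diagonal e) 0 0 (diagonal e))
    (j : Fin n ⊕ Fin n) :
    P *ᵥ (fun i => S (.inl i) j) = Sum.elim e e j • (fun i => S (.inl i) j) ∧
      P *ᵥ (fun i => S (.inr i) j) = Sum.elim e e j • (fun i => S (.inr i) j) := by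
  rw [fromBlocks_diagonal] at h
  constructor <;> funext i
  · have := congrFun₂ h (.inl i) j
    rw [mul_diagonal] at this
    simpa [mul_apply, mulVec, dotProduct, Fintype.sum_sum_type, mul_comm] using this
  · have := congrFun₂ h (.inr i) j
    rw [mul_diagonal] at this
    simpa [mul_apply, mulVec, dotProduct, Fintype.sum_sum_type, mul_comm] using this

end Symplectic

theorem apply_one_eq_apply_zero_of_mulVec_eq {ε : ℝ} (hε : ε ≠ 0) {v : Fin 2 → ℝ}
    (hv : (!![1, ε; ε, 1] * !![1, ε; ε, 1]) *ᵥ v = ((1 + ε) * (1 + ε)) • v) : v 1 = v 0 := by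
  have hrow : (ε + ε) * v 0 + (ε * ε + 1) * v 1 = (1 + ε) * (1 + ε) * v 1 := by
    simpa [mulVec, dotProduct, Fin.sum_univ_two] using congrFun hv 1
  have h2 : (2 * ε) * (v 1 - v 0) = 0 := by linear_combination -hrow
  exact sub_eq_zero.mp ((mul_eq_zero.mp h2).resolve_left (mul_ne_zero two_ne_zero hε))

theorem apply_eq_zero_of_diagonal_mulVec_eq_smul {ι : Type*} [Fintype ι] [DecidableEq ι]
    {d v : ι → ℝ} {c : ℝ} (hv : diagonal d *ᵥ v = c • v) {i : ι} (hi : d i ≠ c) : v i = 0 := by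
  by_contra hvi
  have := congrFun hv i
  rw [mulVec_diagonal, Pi.smul_apply, smul_eq_mul] at this
  exact hi (mul_right_cancel₀ hvi this)

section

variable {ε : ℝ} {S : Matrix (Fin 2 ⊕ Fin 2) (Fin 2 ⊕ Fin 2) ℝ}

theorem IsSymplectic.apply_one_eq_apply_zero_of_mcEx (hε : ε ≠ 0) (hS : IsSymplectic S)
    (h : Sᵀ * McEx ε * S = Dtilde ![1 + ε, 1 - ε]) (j : Fin 2 ⊕ Fin 2)
    (hj : j = .inl 0 ∨ j = .inr 0) :
    S (.inl 1) j = S (.inl 0) j ∧ S (.inr 1) j = S (.inr 0) j := by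
  have hsq := hS.fromBlocks_mul_self_mul_eq h
  rw [diagonal_mul_diagonal] at hsq
  obtain ⟨htop, hbot⟩ := mulVec_eq_smul_of_fromBlocks_mul_eq hsq j
  obtain rfl | rfl := hj <;>
    exact ⟨apply_one_eq_apply_zero_of_mulVec_eq hε htop,
      apply_one_eq_apply_zero_of_mulVec_eq hε hbot⟩

theorem IsSymplectic.apply_one_eq_zero_of_mcEx' (hε : ε ≠ 0) (hS : IsSymplectic S)
    (h : Sᵀ * McEx' ε * S = Dtilde ![1 + ε, 1 - ε]) (j : Fin 2 ⊕ Fin 2)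
    (hj : j = .inl 0 ∨ j = .inr 0) :
    S (.inl 1) j = 0 ∧ S (.inr 1) j = 0 := by
  have hsq := hS.fromBlocks_mul_self_mul_eq h
  rw [diagonal_mul_diagonal] at hsq
  obtain ⟨htop, hbot⟩ := mulVec_eq_smul_of_fromBlocks_mul_eq hsq j
  have hne : (1 - ε) * (1 - ε) ≠ (1 + ε) * (1 + ε) := fun h => hε (by linarith)
  obtain rfl | rfl := hj <;>
    exact ⟨apply_eq_zero_of_diagonal_mulVec_eq_smul htop hne,
      apply_eq_zero_of_diagonal_mulVec_eq_smul hbot hne⟩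

end

theorem Matrix.PosDef.fromBlocks_zero {m n : Type*} [Fintype m] [Fintype n]
    {A : Matrix m m ℝ} {D : Matrix n n ℝ} (hA : A.PosDef) (hD : D.PosDef) :
    (fromBlocks A 0 0 D).PosDef := by
  refine .of_dotProduct_mulVec_pos (hA.isHermitian.fromBlocks (by simp) hD.isHermitian)
    fun x hx => ?_
  have hsplit : star x ⬝ᵥ fromBlocks A 0 0 D *ᵥ x =
      star (x ∘ .inl) ⬝ᵥ A *ᵥ (x ∘ .inl) + star (x ∘ .inr) ⬝ᵥ D *ᵥ (x ∘ .inr) := by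
    simp [fromBlocks_mulVec, dotProduct, Fintype.sum_sum_type]
  rw [hsplit]
  by_cases hl : x ∘ .inl = 0
  · have hr : x ∘ .inr ≠ 0 := fun hr => hx (funext fun i => by
      cases i with
      | inl i => exact congrFun hl i
      | inr i => exact congrFun hr i)
    simpa [hl] using hD.dotProduct_mulVec_pos hr
  · exact add_pos_of_pos_of_nonneg (hA.dotProduct_mulVec_pos hl)
      (hD.posSemidef.dotProduct_mulVec_nonneg _)

theorem posDef_fin_two_of_abs_lt_one {ε : ℝ} (hε : |ε| < 1) :
    (!![1, ε; ε, 1] : Matrix (Fin 2) (Fin 2) ℝ).PosDef := by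
  refine .of_dotProduct_mulVec_pos ?_ fun x hx => ?_
  · ext i j; fin_cases i <;> fin_cases j <;> simp
  have hε2 : 0 < 1 - ε ^ 2 := sub_pos.mpr ((sq_lt_one_iff_abs_lt_one ε).mpr hε)
  have hquad : star x ⬝ᵥ !![1, ε; ε, 1] *ᵥ x = (x 0 + ε * x 1) ^ 2 + (1 - ε ^ 2) * x 1 ^ 2 := by
    simp only [dotProduct, mulVec, Fin.sum_univ_two, of_apply, star_trivial, Pi.star_apply,
      cons_val', cons_val_fin_one, cons_val_zero, cons_val_one]
    ring
  rw [hquad]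
  by_cases h1 : x 1 = 0
  · have h0 : x 0 ≠ 0 := fun h0 => hx (funext fun i => by fin_cases i <;> simp [h0, h1])
    simpa [h1] using sq_pos_of_ne_zero h0
  · exact add_pos_of_nonneg_of_pos (sq_nonneg _) (mul_pos hε2 (sq_pos_of_ne_zero h1))

theorem posDef_mcEx {ε : ℝ} (hε : |ε| < 1) : (McEx ε).PosDef :=
  (posDef_fin_two_of_abs_lt_one hε).fromBlocks_zero (posDef_fin_two_of_abs_lt_one hε)

theorem posDef_mcEx' {ε : ℝ} (hε : |ε| < 1) : (McEx' ε).PosDef := by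
  rw [McEx', Dtilde, fromBlocks_diagonal, posDef_diagonal_iff]
  obtain ⟨h₁, h₂⟩ := abs_lt.mp hε
  rintro (i | i) <;> fin_cases i <;> simp <;> linarith

theorem abs_apply_le_opNorm {ι : Type*} [Fintype ι] [DecidableEq ι] (A : Matrix ι ι ℝ)
    (i j : ι) : |A i j| ≤ opNorm A := by
  let T := LinearMap.toContinuousLinearMap (toEuclideanLin A)
  have hcol : T (EuclideanSpace.single j 1) i = A i j := by
    simp [T, toEuclideanLin, mulVec_single]
  calc |A i j| = ‖T (EuclideanSpace.single j 1) i‖ := by rw [hcol, Real.norm_eq_abs]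
    _ ≤ ‖T (EuclideanSpace.single j 1)‖ := PiLp.norm_apply_le _ _
    _ ≤ opNorm A * ‖EuclideanSpace.single j (1 : ℝ)‖ := T.le_opNorm _
    _ = opNorm A := by simp

theorem half_le_of_two_mul_sub_mul_eq_one {a b c d m : ℝ} (ha : |a| ≤ m) (hb : |b| ≤ m)
    (hc : |c| ≤ m) (hd : |d| ≤ m) (h : 2 * (a * d - c * b) = 1) : 1 / 2 ≤ m := by
  have hm : 0 ≤ m := (abs_nonneg a).trans ha
  have had : |a * d| ≤ m * m := abs_mul a d ▸ mul_le_mul ha hd (abs_nonneg d) hm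
  have hcb : |c * b| ≤ m * m := abs_mul c b ▸ mul_le_mul hc hb (abs_nonneg b) hm
  nlinarith [le_abs_self (a * d), neg_abs_le (c * b)]

/-- **Instability of the diagonalising matrix at degenerate spectrum.**
There is a constant `C > 0`, independent of `ε`, such that for all `ε ∈ (0,1)`
the matrices `M_ε` and `M′_ε` are positive definite with common Williamson
diagonal form `D̃_ε = diag(1+ε, 1−ε, 1+ε, 1−ε)`, and any symplectic `S, S′` with
`Sᵀ M_ε S = D̃_ε` and `S′ᵀ M′_ε S′ = D̃_ε` satisfy `‖S − S′‖∞ ≥ C`. -/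
theorem diagonalising_matrix_instability :
    ∃ C : ℝ, 0 < C ∧ ∀ ε : ℝ, 0 < ε → ε < 1 →
      (McEx ε).PosDef ∧ (McEx' ε).PosDef ∧
      ∀ S S' : Matrix (Fin 2 ⊕ Fin 2) (Fin 2 ⊕ Fin 2) ℝ,
        IsSymplectic S → IsSymplectic S' →
        Sᵀ * McEx ε * S = Dtilde ![1 + ε, 1 - ε] →
        S'ᵀ * McEx' ε * S' = Dtilde ![1 + ε, 1 - ε] →
        C ≤ opNorm (S - S') := by
  refine ⟨1 / 2, one_half_pos, fun ε hε₀ hε₁ => ?_⟩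
  have hε : |ε| < 1 := abs_lt.mpr ⟨by linarith, hε₁⟩
  refine ⟨posDef_mcEx hε, posDef_mcEx' hε, fun S S' hS hS' h h' => ?_⟩
  obtain ⟨ha, hc⟩ := hS.apply_one_eq_apply_zero_of_mcEx hε₀.ne' h (.inl 0) (.inl rfl)
  obtain ⟨hb, hd⟩ := hS.apply_one_eq_apply_zero_of_mcEx hε₀.ne' h (.inr 0) (.inr rfl)
  obtain ⟨ha', hc'⟩ := hS'.apply_one_eq_zero_of_mcEx' hε₀.ne' h' (.inl 0) (.inl rfl)
  obtain ⟨hb', hd'⟩ := hS'.apply_one_eq_zero_of_mcEx' hε₀.ne' h' (.inr 0) (.inr rfl)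
  have hpair := hS.col_pairing_eq_one 0
  rw [Fin.sum_univ_two, Fin.sum_univ_two, ← ha, ← hb, ← hc, ← hd] at hpair
  have hbound (r c) (hr : S' r c = 0) : |S r c| ≤ opNorm (S - S') := by
    simpa [hr] using abs_apply_le_opNorm (S - S') r c
  exact half_le_of_two_mul_sub_mul_eq_one (hbound _ _ ha') (hbound _ _ hb') (hbound _ _ hc')
    (hbound _ _ hd') (by linear_combination hpair)
end

section
/- Operator monotone square-root perturbation bound: Let A, B ∈ ℂ^{n×n} be positive semidefinite Hermitian matrices. Then for every unitarily invariant norm ‖·‖ on n×n complex matrices, ‖A^{1/2} − B^{1/2}‖ ≤ ‖A − B‖∞^{1/2} · ‖Iₙ‖, where ‖·‖∞ is the operator norm and Iₙ the identity matrix. -/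
/-!
Let `X = √A - √B`, a Hermitian matrix, and let `X v = μ v` with `‖v‖ = 1` and `μ ≥ 0`.
Since `A - B = (√B + X)² - √B² = √B X + X √B + X²`, we get
`⟨v, (A - B) v⟩ = 2 μ ⟨v, √B v⟩ + μ² ≥ μ²`, so `μ² ≤ ‖A - B‖∞`; exchanging `A` and `B` handles
`μ ≤ 0`. Thus all eigenvalues of `X` lie in `[-c, c]` with `c = ‖A - B‖∞^{1/2}`. By unitary
invariance `N X` is `N` of the diagonal of eigenvalues, and a real diagonal `diag t` with
`|tᵢ| ≤ 1` is the average of the unitary diagonals `diag (tᵢ ± i √(1 - tᵢ²))`, so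
`N X ≤ c N 1`.
-/

open Matrix
open scoped ComplexOrder

/-- The positive semidefinite square root of a positive semidefinite matrix
(the definition `Matrix.PosSemidef.sqrt` of the older Mathlib, removed since). -/
noncomputable def Matrix.PosSemidef.sqrt {n : Type*} [Fintype n] [DecidableEq n]
    {𝕜 : Type*} [RCLike 𝕜] {A : Matrix n n 𝕜} (hA : A.PosSemidef) : Matrix n n 𝕜 :=
  hA.1.eigenvectorUnitary.1 * diagonal ((↑) ∘ (√·) ∘ hA.1.eigenvalues) *
  (star hA.1.eigenvectorUnitary : Matrix n n 𝕜)

/-- `N` is a unitarily invariant norm on square complex matrices. -/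
def IsUnitarilyInvariantNorm {ι : Type*} [Fintype ι] [DecidableEq ι]
    (N : Matrix ι ι ℂ → ℝ) : Prop :=
  (∀ A B, N (A + B) ≤ N A + N B) ∧
  (∀ (c : ℂ) (A), N (c • A) = ‖c‖ * N A) ∧
  (∀ A, N A = 0 → A = 0) ∧
  (∀ (A : Matrix ι ι ℂ) (U V : Matrix.unitaryGroup ι ℂ),
    N ((U : Matrix ι ι ℂ) * A * (V : Matrix ι ι ℂ)) = N A)

section

variable {𝕜 ι : Type*} [RCLike 𝕜] [Fintype ι] [DecidableEq ι]

namespace Matrix.PosSemidef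

variable {A : Matrix ι ι 𝕜}

lemma sqrt_eq_cfc (hA : A.PosSemidef) : hA.sqrt = cfc Real.sqrt A := by
  rw [hA.1.cfc_eq]
  rfl

lemma sqrt_mul_self (hA : A.PosSemidef) : hA.sqrt * hA.sqrt = A := by
  rw [sqrt_eq_cfc, ← cfc_mul _ _ A]
  refine (cfc_congr fun x hx => ?_).trans (cfc_id' ℝ A hA.1)
  rw [hA.1.spectrum_real_eq_range_eigenvalues] at hx
  obtain ⟨i, rfl⟩ := hx
  exact Real.mul_self_sqrt (hA.eigenvalues_nonneg i)

lemma posSemidef_sqrt (hA : A.PosSemidef) : hA.sqrt.PosSemidef := by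
  simpa [sqrt, star_eq_conjTranspose] using
    (PosSemidef.diagonal fun i => by simp).mul_mul_conjTranspose_same
      (hA.1.eigenvectorUnitary : Matrix ι ι 𝕜)

end Matrix.PosSemidef

lemma opNorm_sub_comm (A B : Matrix ι ι 𝕜) : opNorm (A - B) = opNorm (B - A) := by
  simp only [opNorm, ← neg_sub B A, map_neg, norm_neg]

lemma norm_dotProduct_mulVec_le_opNorm (M : Matrix ι ι 𝕜) (v : EuclideanSpace 𝕜 ι) :
    ‖star ⇑v ⬝ᵥ (M *ᵥ ⇑v)‖ ≤ opNorm M * ‖v‖ ^ 2 := by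
  have h : star ⇑v ⬝ᵥ (M *ᵥ ⇑v) = inner 𝕜 v (toEuclideanLin M v) := by
    rw [EuclideanSpace.inner_eq_star_dotProduct, dotProduct_comm]
    rfl
  calc ‖star ⇑v ⬝ᵥ (M *ᵥ ⇑v)‖ = ‖inner 𝕜 v (toEuclideanLin M v)‖ := by rw [h]
    _ ≤ ‖v‖ * ‖toEuclideanLin M v‖ := norm_inner_le_norm _ _
    _ ≤ ‖v‖ * (opNorm M * ‖v‖) := by
      gcongr
      exact (LinearMap.toContinuousLinearMap _).le_opNorm v
    _ = opNorm M * ‖v‖ ^ 2 := by ring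

lemma sq_mul_norm_sq_le_re_dotProduct_add_mul_self_sub {P X : Matrix ι ι 𝕜}
    (hP : P.PosSemidef) (hX : X.IsHermitian) {v : EuclideanSpace 𝕜 ι} {μ : ℝ} (hμ : 0 ≤ μ)
    (hv : X *ᵥ ⇑v = (μ : 𝕜) • ⇑v) :
    μ ^ 2 * ‖v‖ ^ 2 ≤ RCLike.re (star ⇑v ⬝ᵥ (((P + X) * (P + X) - P * P) *ᵥ ⇑v)) := by
  have hvX : star ⇑v ᵥ* X = (μ : 𝕜) • star ⇑v := by
    rw [← hX.eq, ← star_mulVec, hv, star_smul, RCLike.star_def, RCLike.conj_ofReal]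
  have hvv : star ⇑v ⬝ᵥ ⇑v = ((‖v‖ ^ 2 : ℝ) : 𝕜) := by
    rw [dotProduct_comm, ← EuclideanSpace.inner_eq_star_dotProduct, inner_self_eq_norm_sq_to_K]
    push_cast
    rfl
  have expand : star ⇑v ⬝ᵥ (((P + X) * (P + X) - P * P) *ᵥ ⇑v)
      = ((2 * μ : ℝ) : 𝕜) * (star ⇑v ⬝ᵥ (P *ᵥ ⇑v)) + ((μ ^ 2 * ‖v‖ ^ 2 : ℝ) : 𝕜) := by
    rw [show (P + X) * (P + X) - P * P = P * X + X * P + X * X by noncomm_ring]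
    simp only [add_mulVec, ← mulVec_mulVec, dotProduct_add, hv, mulVec_smul, dotProduct_smul,
      dotProduct_mulVec _ X, hvX, smul_dotProduct, hvv, smul_eq_mul]
    push_cast
    ring
  have hPv : 0 ≤ RCLike.re (star ⇑v ⬝ᵥ (P *ᵥ ⇑v)) :=
    RCLike.nonneg_iff.1 (hP.dotProduct_mulVec_nonneg _) |>.1
  rw [expand, map_add, RCLike.re_ofReal_mul, RCLike.ofReal_re]
  exact le_add_of_nonneg_left (mul_nonneg (by positivity) hPv)

variable {A B : Matrix ι ι 𝕜}

lemma sq_le_opNorm_sub_of_mulVec_sqrt_sub_sqrt (hA : A.PosSemidef) (hB : B.PosSemidef)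
    {v : EuclideanSpace 𝕜 ι} (hv : ‖v‖ = 1) {μ : ℝ} (hμ : 0 ≤ μ)
    (hμv : (hA.sqrt - hB.sqrt) *ᵥ ⇑v = (μ : 𝕜) • ⇑v) :
    μ ^ 2 ≤ opNorm (A - B) := by
  have key := sq_mul_norm_sq_le_re_dotProduct_add_mul_self_sub hB.posSemidef_sqrt
    (hA.posSemidef_sqrt.1.sub hB.posSemidef_sqrt.1) hμ hμv
  rw [add_sub_cancel, hA.sqrt_mul_self, hB.sqrt_mul_self, hv, one_pow, mul_one] at key
  calc μ ^ 2 ≤ RCLike.re (star ⇑v ⬝ᵥ ((A - B) *ᵥ ⇑v)) := key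
    _ ≤ ‖star ⇑v ⬝ᵥ ((A - B) *ᵥ ⇑v)‖ := RCLike.re_le_norm _
    _ ≤ opNorm (A - B) * ‖v‖ ^ 2 := norm_dotProduct_mulVec_le_opNorm _ _
    _ = opNorm (A - B) := by rw [hv, one_pow, mul_one]

lemma sq_eigenvalues_sqrt_sub_sqrt_le_opNorm (hA : A.PosSemidef) (hB : B.PosSemidef)
    (hX : (hA.sqrt - hB.sqrt).IsHermitian) (i : ι) :
    hX.eigenvalues i ^ 2 ≤ opNorm (A - B) := by
  have hv := hX.eigenvectorBasis.orthonormal.1 i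
  have hμv := hX.mulVec_eigenvectorBasis i
  rw [RCLike.real_smul_eq_coe_smul (K := 𝕜)] at hμv
  rcases le_total 0 (hX.eigenvalues i) with hμ | hμ
  · exact sq_le_opNorm_sub_of_mulVec_sqrt_sub_sqrt hA hB hv hμ hμv
  · rw [← neg_sq, opNorm_sub_comm]
    refine sq_le_opNorm_sub_of_mulVec_sqrt_sub_sqrt hB hA hv (neg_nonneg.2 hμ) ?_
    rw [← neg_sub, neg_mulVec, hμv, RCLike.ofReal_neg, neg_smul]

lemma Matrix.diagonal_mem_unitaryGroup {d : ι → 𝕜} (hd : ∀ i, ‖d i‖ = 1) : diagonal d ∈ unitaryGroup ι 𝕜 := by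
  rw [mem_unitaryGroup_iff', star_eq_conjTranspose, diagonal_conjTranspose, diagonal_mul_diagonal,
    ← diagonal_one]
  congr 1
  funext i
  simp [RCLike.conj_mul, hd i]

end

namespace IsUnitarilyInvariantNorm

variable {ι : Type*} [Fintype ι] [DecidableEq ι] {N : Matrix ι ι ℂ → ℝ}

lemma apply_unitary (hN : IsUnitarilyInvariantNorm N) (U : unitaryGroup ι ℂ) :
    N U = N 1 := by
  obtain ⟨-, -, -, hinv⟩ := hN
  simpa using hinv 1 U 1

lemma diagonal_ofReal_le (hN : IsUnitarilyInvariantNorm N) {t : ι → ℝ} (ht : ∀ i, |t i| ≤ 1) :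
    N (diagonal fun i => (t i : ℂ)) ≤ N 1 := by
  have hunitary := hN.apply_unitary
  obtain ⟨hadd, hsmul, -, -⟩ := hN
  set s : ι → ℝ := fun i => √(1 - t i ^ 2)
  have hts : ∀ i, (t i) ^ 2 + (s i) ^ 2 = 1 := fun i => by
    rw [Real.sq_sqrt (by nlinarith [abs_le.1 (ht i), sq_abs (t i)])]
    ring
  have hU : ∀ σ : ℝ, σ ^ 2 = 1 →
      diagonal (fun i => (t i : ℂ) + (σ * s i : ℝ) * Complex.I) ∈ unitaryGroup ι ℂ :=
    fun σ hσ => diagonal_mem_unitaryGroup fun i => by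
      rw [Complex.norm_add_mul_I, mul_pow, hσ, one_mul, hts, Real.sqrt_one]
  have hsplit : diagonal (fun i => (t i : ℂ)) = ((1 / 2 : ℝ) : ℂ) •
      (diagonal (fun i => (t i : ℂ) + (1 * s i : ℝ) * Complex.I) +
        diagonal (fun i => (t i : ℂ) + (-1 * s i : ℝ) * Complex.I)) := by
    rw [diagonal_add, ← diagonal_smul]
    congr 1
    funext i
    simp only [Pi.smul_apply, smul_eq_mul]
    push_cast
    ring
  calc N (diagonal fun i => (t i : ℂ))
      ≤ 1 / 2 * (N 1 + N 1) := by
        rw [hsplit, hsmul, Complex.norm_real, Real.norm_of_nonneg (by norm_num)]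
        gcongr
        refine (hadd _ _).trans_eq ?_
        rw [hunitary ⟨_, hU 1 (one_pow 2)⟩, hunitary ⟨_, hU (-1) (by norm_num)⟩]
    _ = N 1 := by ring

lemma le_mul_of_abs_eigenvalues_le (hN : IsUnitarilyInvariantNorm N) {X : Matrix ι ι ℂ}
    (hX : X.IsHermitian) {c : ℝ} (hc : 0 ≤ c) (hXc : ∀ i, |hX.eigenvalues i| ≤ c) :
    N X ≤ c * N 1 := by
  have hdiag : N X = N (diagonal fun i => (hX.eigenvalues i : ℂ)) := by
    conv_lhs => rw [hX.spectral_theorem, Unitary.conjStarAlgAut_apply]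
    exact hN.2.2.2 _ _ (star hX.eigenvectorUnitary)
  have hscale : (diagonal fun i => (hX.eigenvalues i : ℂ))
      = (c : ℂ) • diagonal fun i => ((hX.eigenvalues i / c : ℝ) : ℂ) := by
    rw [← diagonal_smul]
    congr 1
    funext i
    rw [Pi.smul_apply, smul_eq_mul, ← Complex.ofReal_mul, mul_div_cancel_of_imp' fun hc0 => ?_]
    exact abs_nonpos_iff.1 (hc0 ▸ hXc i)
  rw [hdiag, hscale, hN.2.1, Complex.norm_real, Real.norm_of_nonneg hc]
  gcongr
  refine hN.diagonal_ofReal_le fun i => ?_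
  rw [abs_div, abs_of_nonneg hc]
  exact div_le_one_of_le₀ (hXc i) hc

end IsUnitarilyInvariantNorm

/-- **Operator monotone square-root perturbation bound.**  For positive
semidefinite Hermitian `A, B ∈ ℂ^{n×n}` and every unitarily invariant norm `N`,
`N(A^{1/2} − B^{1/2}) ≤ ‖A − B‖∞^{1/2} · N(Iₙ)`. -/
theorem sqrt_perturbation_bound (n : ℕ) (A B : Matrix (Fin n) (Fin n) ℂ)
    (hA : A.PosSemidef) (hB : B.PosSemidef)
    (N : Matrix (Fin n) (Fin n) ℂ → ℝ) (hN : IsUnitarilyInvariantNorm N) :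
    N (hA.sqrt - hB.sqrt) ≤ Real.sqrt (opNorm (A - B)) * N 1 := by
  have hX : (hA.sqrt - hB.sqrt).IsHermitian := hA.posSemidef_sqrt.1.sub hB.posSemidef_sqrt.1
  refine hN.le_mul_of_abs_eigenvalues_le hX (Real.sqrt_nonneg _) fun i => ?_
  rw [← Real.sqrt_sq_eq_abs]
  exact Real.sqrt_le_sqrt (sq_eigenvalues_sqrt_sub_sqrt_le_opNorm hA hB hX i)
end
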